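/- Let Φ be an extremal nondegenerate qubit channel and Φ = Φ₁ ∘ Φ₂ a decomposition into qubit channels. Then both Φ₁ and Φ₂ are extremal in the convex set of qubit channels. -/

import Mathlib

open Matrix Kronecker
open scoped ComplexOrder

noncomputable section

/-- The Choi matrix `C_Φ = (1/2) ∑_{i,j} Φ(E_{ij}) ⊗ E_{ij}`. -/
def choiMatrix (f : Matrix (Fin 2) (Fin 2) ℂ → Matrix (Fin 2) (Fin 2) ℂ) :
    Matrix (Fin 2 × Fin 2) (Fin 2 × Fin 2) ℂ :=
  (1 / 2 : ℂ) • ∑ i : Fin 2, ∑ j : Fin 2,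
    (f (Matrix.single i j 1)) ⊗ₖ (Matrix.single i j 1)

/-- The convex set of qubit channels: trace-preserving linear maps on `M₂(ℂ)` with
positive semidefinite Choi matrix (complete positivity). -/
def qubitChannels : Set (Matrix (Fin 2) (Fin 2) ℂ →ₗ[ℂ] Matrix (Fin 2) (Fin 2) ℂ) :=
  {Φ | (∀ ρ, (Φ ρ).trace = ρ.trace) ∧ (choiMatrix Φ).PosSemidef}

/-!
Since `M₂(ℂ)` is finite-dimensional, injectivity of `Φ = Φ₁ ∘ Φ₂` makes `Φ₂` surjective and
`Φ₁` injective. Hence `Ψ ↦ Ψ ∘ Φ₂` and `Ψ ↦ Φ₁ ∘ Ψ` are injective ℝ-linear maps; they send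
channels to channels (compose the Kraus representations read off the Choi matrices) and send
`Φ₁`, resp. `Φ₂`, to the extreme point `Φ`. An injective linear map reflects extreme points: a
nontrivial splitting `Φ₂ = c₁Ψ₁ + c₂Ψ₂` would give the nontrivial splitting
`Φ = c₁(Φ₁ ∘ Ψ₁) + c₂(Φ₁ ∘ Ψ₂)`.
-/

theorem Set.mem_extremePoints_of_injective_linearMap {𝕜 E F : Type*} [Semiring 𝕜]
    [PartialOrder 𝕜] [AddCommMonoid E] [Module 𝕜 E] [AddCommMonoid F] [Module 𝕜 F]
    {A : Set E} {B : Set F} {x : E} (f : E →ₗ[𝕜] F) (hf : Function.Injective f)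
    (hAB : Set.MapsTo f A B) (hx : x ∈ A) (hfx : f x ∈ B.extremePoints 𝕜) :
    x ∈ A.extremePoints 𝕜 :=
  ⟨hx, fun _ hy _ hz ⟨a, b, ha, hb, hab, hxyz⟩ => hf <|
    hfx.2 (hAB hy) (hAB hz) ⟨a, b, ha, hb, hab, by rw [← hxyz, map_add, map_smul, map_smul]⟩⟩

section Kraus

variable {R : Type*} [CommSemiring R] [StarRing R] {ι κ m n p : Type*}
  [Fintype ι] [Fintype κ] [Fintype n] [Fintype p]

def krausMap (A : ι → Matrix m n R) : Matrix n n R →ₗ[R] Matrix m m R where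
  toFun X := ∑ k, A k * X * (A k)ᴴ
  map_add' X Y := by simp only [Matrix.mul_add, Matrix.add_mul, Finset.sum_add_distrib]
  map_smul' c X := by simp [Finset.smul_sum]

theorem krausMap_apply (A : ι → Matrix m n R) (X : Matrix n n R) :
    krausMap A X = ∑ k, A k * X * (A k)ᴴ :=
  rfl

theorem krausMap_comp_krausMap (A : ι → Matrix m n R) (B : κ → Matrix n p R) :
    krausMap A ∘ₗ krausMap B = krausMap fun k : ι × κ => A k.1 * B k.2 := by
  ext X : 1
  simp only [LinearMap.comp_apply, krausMap_apply, Matrix.mul_sum, Matrix.sum_mul,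
    Fintype.sum_prod_type, conjTranspose_mul, Matrix.mul_assoc]

end Kraus

theorem choiMatrix_apply (f : Matrix (Fin 2) (Fin 2) ℂ → Matrix (Fin 2) (Fin 2) ℂ)
    (a b c d : Fin 2) :
    choiMatrix f (a, b) (c, d) = (1 / 2 : ℂ) * f (single b d 1) a c := by
  simp [choiMatrix, Matrix.sum_apply, single_apply, ite_and, -Fin.sum_univ_two]

theorem eq_of_choiMatrix_eq {Φ Ψ : Matrix (Fin 2) (Fin 2) ℂ →ₗ[ℂ] Matrix (Fin 2) (Fin 2) ℂ}
    (h : choiMatrix Φ = choiMatrix Ψ) : Φ = Ψ := by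
  refine ext_linearMap (R := ℂ) fun b d => LinearMap.ext_ring <| Matrix.ext fun a c => ?_
  simpa [choiMatrix_apply] using congr_fun₂ h (a, b) (c, d)

theorem choiMatrix_krausMap {ι : Type*} [Fintype ι] (A : ι → Matrix (Fin 2) (Fin 2) ℂ) :
    choiMatrix (krausMap A) =
      (1 / 2 : ℂ) • ((of fun k (p : Fin 2 × Fin 2) => star (A k p.1 p.2))ᴴ *
        of fun k (p : Fin 2 × Fin 2) => star (A k p.1 p.2)) := by
  ext ⟨a, b⟩ ⟨c, d⟩
  simp [choiMatrix_apply, krausMap_apply, Matrix.sum_apply, Matrix.mul_apply, single_apply,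
    ite_and, Finset.sum_ite_eq, Finset.mul_sum]

theorem posSemidef_choiMatrix_krausMap {ι : Type*} [Fintype ι]
    (A : ι → Matrix (Fin 2) (Fin 2) ℂ) : (choiMatrix (krausMap A)).PosSemidef := by
  rw [choiMatrix_krausMap]
  exact (posSemidef_conjTranspose_mul_self _).smul (div_nonneg zero_le_one zero_le_two)

theorem exists_krausMap_eq_of_posSemidef_choiMatrix
    {Φ : Matrix (Fin 2) (Fin 2) ℂ →ₗ[ℂ] Matrix (Fin 2) (Fin 2) ℂ}
    (hΦ : (choiMatrix Φ).PosSemidef) :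
    ∃ A : Fin 2 × Fin 2 → Matrix (Fin 2) (Fin 2) ℂ, krausMap A = Φ := by
  -- factoring `2 • C_Φ` rather than `C_Φ` keeps `√2` out of the Kraus operators
  obtain ⟨B, hB⟩ : ∃ B, (2 : ℂ) • choiMatrix Φ = star B * B := by
    open scoped MatrixOrder in
    exact CStarAlgebra.nonneg_iff_eq_star_mul_self.mp (hΦ.smul zero_le_two).nonneg
  refine ⟨fun k => of fun a b => star (B k (a, b)), eq_of_choiMatrix_eq ?_⟩
  have hof : (of fun k (p : Fin 2 × Fin 2) => B k (p.1, p.2)) = B := rfl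
  rw [choiMatrix_krausMap]
  simp only [of_apply, star_star, hof, ← star_eq_conjTranspose, ← hB, smul_smul]
  norm_num

theorem comp_mem_qubitChannels {Φ Ψ : Matrix (Fin 2) (Fin 2) ℂ →ₗ[ℂ] Matrix (Fin 2) (Fin 2) ℂ}
    (hΦ : Φ ∈ qubitChannels) (hΨ : Ψ ∈ qubitChannels) : Φ ∘ₗ Ψ ∈ qubitChannels := by
  refine ⟨fun ρ => by rw [LinearMap.comp_apply, hΦ.1, hΨ.1], ?_⟩
  obtain ⟨A, rfl⟩ := exists_krausMap_eq_of_posSemidef_choiMatrix hΦ.2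
  obtain ⟨B, rfl⟩ := exists_krausMap_eq_of_posSemidef_choiMatrix hΨ.2
  rw [krausMap_comp_krausMap]
  exact posSemidef_choiMatrix_krausMap _

/-- If an extremal nondegenerate (injective) qubit channel decomposes as `Φ = Φ₁ ∘ Φ₂`
with `Φ₁, Φ₂` qubit channels, then both `Φ₁` and `Φ₂` are extremal in the convex set of
qubit channels. -/
theorem extremal_factors
    (Φ Φ₁ Φ₂ : Matrix (Fin 2) (Fin 2) ℂ →ₗ[ℂ] Matrix (Fin 2) (Fin 2) ℂ)
    (hΦ : Φ ∈ qubitChannels.extremePoints ℝ)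
    (hinj : Function.Injective Φ)
    (h₁ : Φ₁ ∈ qubitChannels) (h₂ : Φ₂ ∈ qubitChannels)
    (hcomp : Φ = Φ₁ ∘ₗ Φ₂) :
    Φ₁ ∈ qubitChannels.extremePoints ℝ ∧ Φ₂ ∈ qubitChannels.extremePoints ℝ := by
  subst hcomp
  have h₂surj : Function.Surjective Φ₂ :=
    LinearMap.injective_iff_surjective.mp (hinj.of_comp (f := Φ₁))
  have h₁inj : Function.Injective Φ₁ :=
    LinearMap.injective_iff_surjective.mpr
      ((LinearMap.injective_iff_surjective.mp hinj).of_comp (g := Φ₂))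
  constructor
  · exact Set.mem_extremePoints_of_injective_linearMap (LinearMap.lcomp ℝ _ Φ₂)
      (LinearMap.lcomp_injective_of_surjective _ h₂surj)
      (fun _ hΨ => comp_mem_qubitChannels hΨ h₂) h₁ hΦ
  · exact Set.mem_extremePoints_of_injective_linearMap (LinearMap.compRight ℝ Φ₁)
      h₁inj.injective_linearMapComp_left (fun _ hΨ => comp_mem_qubitChannels h₁ hΨ) h₂ hΦ

end
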